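/- Water-filling does not increase total cost: under the staircase nondecreasing cost assumption, the water-filled matrix P' of a stochastic matrix P satisfies Σ_{x,y} p(x)c(x,y)p'_{xy} ≤ Σ_{x,y} p(x)c(x,y)p_{xy}. -/

import Mathlib

/-! Row by row, the prefix sums of the water-filled row dominate those of `P`: the greedy fill
puts as much mass as the column maxima allow into the cheapest columns, and `P` can never exceed
a column maximum. Along a row the costs, read through `toReal`, are nondecreasing (infinite
entries carry no mass, come first, and read as `0`), so Abel summation turns this prefix dominance
into the cost inequality. -/

open Finset
open scoped ENNReal

/-- Partial row sums of the water-filled matrix: `wfSum P c x n` is the total mass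
placed in the first `n` columns of row `x` by the water-filling procedure, which fills
each row left to right up to the column maxima of `P`, skipping infinite-cost entries. -/
noncomputable def wfSum {M N : ℕ} (P : Fin (M + 1) → Fin (N + 1) → ℝ)
    (c : Fin (M + 1) → Fin (N + 1) → ℝ≥0∞) (x : Fin (M + 1)) : ℕ → ℝ
  | 0 => 0
  | n + 1 =>
    if h : n < N + 1 then
      if c x ⟨n, h⟩ = ⊤ then wfSum P c x n
      else wfSum P c x n +
        min (univ.sup' univ_nonempty fun x' => P x' ⟨n, h⟩) (1 - wfSum P c x n)
    else wfSum P c x n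

/-- The water-filled matrix `P'` associated to `P` and the cost function `c`. -/
noncomputable def waterfill {M N : ℕ} (P : Fin (M + 1) → Fin (N + 1) → ℝ)
    (c : Fin (M + 1) → Fin (N + 1) → ℝ≥0∞) (x : Fin (M + 1)) (i : Fin (N + 1)) : ℝ :=
  wfSum P c x (i.val + 1) - wfSum P c x i.val

theorem sum_range_mul_le_of_sum_range_le {f q r : ℕ → ℝ} {n : ℕ}
    (hf : Monotone f)
    (hpartial : ∀ k < n, ∑ i ∈ range k, r i ≤ ∑ i ∈ range k, q i)
    (htotal : ∑ i ∈ range n, q i = ∑ i ∈ range n, r i) :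
    ∑ i ∈ range n, f i * q i ≤ ∑ i ∈ range n, f i * r i := by
  have hq := sum_range_by_parts f q n
  have hr := sum_range_by_parts f r n
  simp only [smul_eq_mul] at hq hr
  rw [hq, hr, htotal]
  refine sub_le_sub_left (sum_le_sum fun i hi => ?_) _
  have hi : i + 1 < n := by rw [mem_range] at hi; omega
  exact mul_le_mul_of_nonneg_left (hpartial (i + 1) hi) (sub_nonneg.2 (hf i.le_succ))

theorem ENNReal.ofReal_mul_eq_ofReal_mul_toReal {a : ℝ} {c : ℝ≥0∞} (ha : 0 ≤ a)
    (hc : c = ⊤ → a = 0) : ENNReal.ofReal a * c = ENNReal.ofReal (a * c.toReal) := by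
  by_cases htop : c = ⊤
  · simp [hc htop]
  · rw [ENNReal.ofReal_mul ha, ENNReal.ofReal_toReal htop]

theorem sum_sum_ofReal_mul_eq_ofReal {α β : Type*} [Fintype α] [Fintype β]
    {p : α → ℝ} {Q : α → β → ℝ} {c : α → β → ℝ≥0∞} (hp : ∀ x, 0 ≤ p x)
    (hQ : ∀ x y, 0 ≤ Q x y) (hQc : ∀ x y, c x y = ⊤ → Q x y = 0) :
    ∑ x, ∑ y, ENNReal.ofReal (p x * Q x y) * c x y =
      ENNReal.ofReal (∑ x, p x * ∑ y, (c x y).toReal * Q x y) := by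
  have hnn : ∀ x y, 0 ≤ p x * Q x y := fun x y => mul_nonneg (hp x) (hQ x y)
  rw [ENNReal.ofReal_sum_of_nonneg fun x _ =>
    mul_nonneg (hp x) (sum_nonneg fun y _ => mul_nonneg ENNReal.toReal_nonneg (hQ x y))]
  refine sum_congr rfl fun x _ => ?_
  rw [mul_sum, ENNReal.ofReal_sum_of_nonneg fun y _ =>
    mul_nonneg (hp x) (mul_nonneg ENNReal.toReal_nonneg (hQ x y))]
  refine sum_congr rfl fun y _ => ?_
  rw [ENNReal.ofReal_mul_eq_ofReal_mul_toReal (hnn x y) fun h => by simp [hQc x y h],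
    mul_assoc, mul_comm (Q x y)]

theorem monotone_toReal_of_staircase {N : ℕ} {c : Fin (N + 1) → ℝ≥0∞}
    (hstair : ∀ i j : Fin (N + 1), i < j → c i ≠ ⊤ → c i ≤ c j ∧ c j ≠ ⊤) :
    Monotone fun y => (c y).toReal := by
  intro i j hij
  rcases hij.lt_or_eq with hlt | rfl
  · by_cases hi : c i = ⊤
    · simp [hi]
    · exact ENNReal.toReal_mono (hstair i j hlt hi).2 (hstair i j hlt hi).1
  · rfl

theorem Fin.clamp_val {m : ℕ} (y : Fin (m + 1)) : Fin.clamp y m = y :=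
  Fin.ext (min_eq_left (Nat.lt_succ_iff.1 y.isLt))

theorem Fin.sum_range_extend_val {n : ℕ} {γ : Type*} [AddCommMonoid γ] (g : Fin n → γ)
    (e : ℕ → γ) : ∑ i ∈ range n, Function.extend Fin.val g e i = ∑ i, g i := by
  rw [sum_range]
  exact sum_congr rfl fun i _ => Fin.val_injective.extend_apply g e i

section WaterFilling

variable {M N : ℕ} (P : Fin (M + 1) → Fin (N + 1) → ℝ)
    (c : Fin (M + 1) → Fin (N + 1) → ℝ≥0∞) (x : Fin (M + 1))

theorem wfSum_le_one (n : ℕ) : wfSum P c x n ≤ 1 := by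
  induction n with
  | zero => simp [wfSum]
  | succ n ih =>
    rw [wfSum]
    split_ifs with hn
    · exact ih
    · linarith [min_le_right (univ.sup' univ_nonempty fun x' => P x' ⟨n, hn⟩)
        (1 - wfSum P c x n)]
    · exact ih

theorem wfSum_le_wfSum_succ (hP : ∀ x y, 0 ≤ P x y) (n : ℕ) :
    wfSum P c x n ≤ wfSum P c x (n + 1) := by
  rw [wfSum]
  split_ifs with hn
  · rfl
  · have hcol : 0 ≤ univ.sup' univ_nonempty fun x' => P x' ⟨n, hn⟩ :=
      (hP x _).trans (le_sup' (fun x' => P x' ⟨n, hn⟩) (mem_univ x))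
    linarith [le_min hcol (sub_nonneg.2 (wfSum_le_one P c x n))]
  · rfl

theorem waterfill_nonneg (hP : ∀ x y, 0 ≤ P x y) (y : Fin (N + 1)) :
    0 ≤ waterfill P c x y :=
  sub_nonneg.2 (wfSum_le_wfSum_succ P c x hP y)

theorem waterfill_eq_zero_of_eq_top {y : Fin (N + 1)} (hy : c x y = ⊤) :
    waterfill P c x y = 0 := by
  rw [waterfill, wfSum, dif_pos y.isLt, if_pos hy, sub_self]

theorem sum_range_extend_le_wfSum (hP : ∀ x y, 0 ≤ P x y) (hrow : ∑ y, P x y = 1)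
    (hfin : ∀ y, c x y = ⊤ → P x y = 0) (n : ℕ) :
    ∑ i ∈ range n, Function.extend Fin.val (P x) 0 i ≤ wfSum P c x n := by
  induction n with
  | zero => simp [wfSum]
  | succ n ih =>
    rw [sum_range_succ, wfSum]
    by_cases hn : n < N + 1
    swap
    · rw [dif_neg hn, Function.extend_apply' _ _ _ fun ⟨i, hi⟩ => hn (hi ▸ i.isLt),
        Pi.zero_apply, add_zero]
      exact ih
    have hrn : Function.extend Fin.val (P x) 0 n = P x ⟨n, hn⟩ :=
      Fin.val_injective.extend_apply (P x) 0 ⟨n, hn⟩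
    rw [dif_pos hn, hrn]
    split_ifs with htop
    · rw [hfin _ htop, add_zero]
      exact ih
    · have hle : ∑ i ∈ range n, Function.extend Fin.val (P x) 0 i + P x ⟨n, hn⟩ ≤ 1 := by
        have hr0 : 0 ≤ Function.extend Fin.val (P x) (0 : ℕ → ℝ) :=
          Function.extend_nonneg (hP x) le_rfl
        rw [← hrn, ← sum_range_succ, ← hrow, ← Fin.sum_range_extend_val (P x) 0]
        exact sum_le_sum_of_subset_of_nonneg (range_subset_range.2 hn) fun i _ _ => hr0 i
      rw [← min_add_add_left]
      exact le_min (by linarith [le_sup' (fun x' => P x' ⟨n, hn⟩) (mem_univ x)]) (by linarith)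

theorem sum_toReal_mul_waterfill_le (hP : ∀ x y, 0 ≤ P x y) (hrow : ∑ y, P x y = 1)
    (hfin : ∀ y, c x y = ⊤ → P x y = 0)
    (hstair : ∀ i j : Fin (N + 1), i < j → c x i ≠ ⊤ → c x i ≤ c x j ∧ c x j ≠ ⊤) :
    ∑ y, (c x y).toReal * waterfill P c x y ≤ ∑ y, (c x y).toReal * P x y := by
  have hdom := sum_range_extend_le_wfSum P c x hP hrow hfin
  have hwf : ∀ k, ∑ i ∈ range k, (wfSum P c x (i + 1) - wfSum P c x i) = wfSum P c x k :=
    fun k => by rw [sum_range_sub, show wfSum P c x 0 = 0 from rfl, sub_zero]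
  have hfull : wfSum P c x (N + 1) = 1 := by
    refine le_antisymm (wfSum_le_one P c x _) ?_
    simpa only [Fin.sum_range_extend_val, hrow] using hdom (N + 1)
  -- Costs are extended to `ℕ` monotonically by clamping, the row of `P` by zeros.
  have key := sum_range_mul_le_of_sum_range_le (n := N + 1)
    ((monotone_toReal_of_staircase hstair).comp Fin.clamp_monotone)
    (fun k _ => (hdom k).trans_eq (hwf k).symm)
    (by rw [hwf, hfull, Fin.sum_range_extend_val, hrow])
  simpa only [sum_range, Function.comp_apply, Fin.clamp_val, Fin.val_injective.extend_apply,
    waterfill] using key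

end WaterFilling

theorem waterfill_cost_le_general {M N : ℕ}
    (p : Fin (M + 1) → ℝ) (hp : ∀ x, 0 ≤ p x)
    (P : Fin (M + 1) → Fin (N + 1) → ℝ)
    (c : Fin (M + 1) → Fin (N + 1) → ℝ≥0∞)
    (hPnn : ∀ x y, 0 ≤ P x y) (hProw : ∀ x, ∑ y, P x y = 1)
    (hfin : ∀ x y, c x y = ⊤ → P x y = 0)
    (hstair₂ : ∀ x, ∀ i j : Fin (N + 1), i < j → c x i ≠ ⊤ →
      c x i ≤ c x j ∧ c x j ≠ ⊤) :
    ∑ x, ∑ y, ENNReal.ofReal (p x * waterfill P c x y) * c x y ≤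
      ∑ x, ∑ y, ENNReal.ofReal (p x * P x y) * c x y := by
  rw [sum_sum_ofReal_mul_eq_ofReal hp (fun x => waterfill_nonneg P c x hPnn)
      (fun x _ => waterfill_eq_zero_of_eq_top P c x),
    sum_sum_ofReal_mul_eq_ofReal hp hPnn hfin]
  refine ENNReal.ofReal_le_ofReal (sum_le_sum fun x _ => mul_le_mul_of_nonneg_left ?_ (hp x))
  exact sum_toReal_mul_waterfill_le P c x hPnn (hProw x) (hfin x) (hstair₂ x)

/-- Water-filling does not increase the total expected cost, provided the cost
function is staircase nondecreasing and `P` is a stochastic matrix of finite cost. -/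
theorem waterfill_cost_le {M N : ℕ}
    (p : Fin (M + 1) → ℝ) (hp : ∀ x, 0 ≤ p x) (hp1 : ∑ x, p x = 1)
    (P : Fin (M + 1) → Fin (N + 1) → ℝ)
    (c : Fin (M + 1) → Fin (N + 1) → ℝ≥0∞)
    (hPnn : ∀ x y, 0 ≤ P x y) (hProw : ∀ x, ∑ y, P x y = 1)
    (hfin : ∀ x y, c x y = ⊤ → P x y = 0)
    (hstair₁ : ∀ i j : Fin (M + 1), i < j → ∀ y, c i y = ⊤ → c j y = ⊤)
    (hstair₂ : ∀ x, ∀ i j : Fin (N + 1), i < j → c x i ≠ ⊤ →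
      c x i ≤ c x j ∧ c x j ≠ ⊤) :
    ∑ x, ∑ y, ENNReal.ofReal (p x * waterfill P c x y) * c x y ≤
      ∑ x, ∑ y, ENNReal.ofReal (p x * P x y) * c x y :=
  waterfill_cost_le_general p hp P c hPnn hProw hfin hstair₂
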